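/- arXiv:2509.03977 — 4 statements merged into one kernel-verified Lean document; each statement's English description precedes it below -/
import Mathlib

section
/- Let 𝒜 : E → F be an injective linear map between finite-dimensional real inner product spaces with positive definite 𝒜*𝒜, and let K ⊆ E be a nonempty closed convex set. For any x ∈ F, the projection Π_{𝒜K}(x) equals 𝒜(z(x)), where z(x) is the unique minimizer over K of the strongly convex function u ↦ (1/2)⟨𝒜*𝒜 u, u⟩ − ⟨𝒜*x, u⟩. -/
/-!
Up to the constant `‖x‖² / 2`, the objective is `u ↦ ‖x - 𝒜 u‖² / 2`, so `𝒜 z` is a nearest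
point of `𝒜 K` to `x`. Nearest points in a convex set are unique: adding the variational
inequalities `⟪x - p, q - p⟫ ≤ 0` and `⟪x - q, p - q⟫ ≤ 0` gives `‖p - q‖² ≤ 0`.
-/

open scoped RealInnerProductSpace

section NearestPoint

variable {F : Type*} [NormedAddCommGroup F] [InnerProductSpace ℝ F]

theorem IsMinOn.real_inner_sub_le_zero {S : Set F} (hS : Convex ℝ S) {x p : F} (hp : p ∈ S)
    (hmin : IsMinOn (fun w => ‖x - w‖) S p) : ∀ w ∈ S, ⟪x - p, w - p⟫ ≤ 0 :=
  (norm_eq_iInf_iff_real_inner_le_zero hS hp).1 (hmin.iInf_eq hp).symm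

theorem Convex.eq_of_isMinOn_norm_sub {S : Set F} (hS : Convex ℝ S) {x p q : F}
    (hp : p ∈ S) (hq : q ∈ S) (hpmin : IsMinOn (fun w => ‖x - w‖) S p)
    (hqmin : IsMinOn (fun w => ‖x - w‖) S q) : p = q := by
  have hpq : ⟪x - p, q - p⟫ ≤ 0 := hpmin.real_inner_sub_le_zero hS hp q hq
  have hqp : ⟪x - q, p - q⟫ ≤ 0 := hqmin.real_inner_sub_le_zero hS hq p hp
  have hsum : ⟪q - p, q - p⟫ = ⟪x - p, q - p⟫ + ⟪x - q, p - q⟫ := by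
    rw [← neg_sub q p, inner_neg_right, ← sub_eq_add_neg, ← inner_sub_left]
    congr 1
    abel
  have hle : ‖q - p‖ ^ 2 ≤ 0 := by
    rw [← real_inner_self_eq_norm_sq, hsum]
    linarith
  exact (sub_eq_zero.1 (norm_eq_zero.1 (sq_nonpos_iff _ |>.1 hle))).symm

end NearestPoint

section LeastSquares

variable {E F : Type*} [NormedAddCommGroup E] [InnerProductSpace ℝ E] [CompleteSpace E]
  [NormedAddCommGroup F] [InnerProductSpace ℝ F] [CompleteSpace F]

theorem ContinuousLinearMap.half_inner_adjoint_comp_self_sub_inner_adjoint (A : E →L[ℝ] F)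
    (x : F) (u : E) :
    (1 / 2 : ℝ) * ⟪(ContinuousLinearMap.adjoint A) (A u), u⟫ -
        ⟪(ContinuousLinearMap.adjoint A) x, u⟫ =
      (1 / 2 : ℝ) * ‖x - A u‖ ^ 2 - (1 / 2 : ℝ) * ‖x‖ ^ 2 := by
  rw [ContinuousLinearMap.adjoint_inner_left, ContinuousLinearMap.adjoint_inner_left,
    norm_sub_sq_real, real_inner_self_eq_norm_sq]
  ring

theorem ContinuousLinearMap.isMinOn_norm_sub_image_of_isMinOn (A : E →L[ℝ] F) {K : Set E}
    {x : F} {z : E}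
    (hzmin : ∀ u ∈ K,
      (1 / 2 : ℝ) * ⟪(ContinuousLinearMap.adjoint A) (A z), z⟫ -
        ⟪(ContinuousLinearMap.adjoint A) x, z⟫ ≤
      (1 / 2 : ℝ) * ⟪(ContinuousLinearMap.adjoint A) (A u), u⟫ -
        ⟪(ContinuousLinearMap.adjoint A) x, u⟫) :
    IsMinOn (fun w => ‖x - w‖) (A '' K) (A z) := by
  rintro _ ⟨u, hu, rfl⟩
  have h := hzmin u hu
  rw [A.half_inner_adjoint_comp_self_sub_inner_adjoint,
    A.half_inner_adjoint_comp_self_sub_inner_adjoint] at h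
  exact (sq_le_sq₀ (norm_nonneg _) (norm_nonneg _)).1 (by linarith)

end LeastSquares

theorem projection_image_eq_general
    {E F : Type*} [NormedAddCommGroup E] [InnerProductSpace ℝ E] [FiniteDimensional ℝ E]
    [NormedAddCommGroup F] [InnerProductSpace ℝ F] [FiniteDimensional ℝ F]
    (A : E →L[ℝ] F)
    (K : Set E) (hconv : Convex ℝ K)
    (x : F) (z : E) (hzK : z ∈ K)
    (hzmin : ∀ u ∈ K,
      (1 / 2 : ℝ) * ⟪(ContinuousLinearMap.adjoint A) (A z), z⟫ -
        ⟪(ContinuousLinearMap.adjoint A) x, z⟫ ≤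
      (1 / 2 : ℝ) * ⟪(ContinuousLinearMap.adjoint A) (A u), u⟫ -
        ⟪(ContinuousLinearMap.adjoint A) x, u⟫)
    (pr : F) (hprK : pr ∈ A '' K)
    (hprmin : ∀ w ∈ A '' K, ‖x - pr‖ ≤ ‖x - w‖) :
    pr = A z :=
  (hconv.linear_image A.toLinearMap).eq_of_isMinOn_norm_sub hprK ⟨z, hzK, rfl⟩
    (isMinOn_iff.2 hprmin) (A.isMinOn_norm_sub_image_of_isMinOn hzmin)

/-- Let `𝒜 : E → F` be an injective continuous linear map with `𝒜*𝒜` positive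
definite, `K ⊆ E` nonempty closed convex, and `x ∈ F`. If `z` minimizes the
strongly convex function `u ↦ (1/2)⟪𝒜*𝒜 u, u⟫ − ⟪𝒜*x, u⟫` over `K`, then the
metric projection of `x` onto `𝒜K` equals `𝒜 z`. -/
theorem projection_image_eq
    {E F : Type*} [NormedAddCommGroup E] [InnerProductSpace ℝ E] [FiniteDimensional ℝ E]
    [NormedAddCommGroup F] [InnerProductSpace ℝ F] [FiniteDimensional ℝ F]
    (A : E →L[ℝ] F) (hA : Function.Injective A)
    (hpd : ∀ u : E, u ≠ 0 → 0 < ⟪(ContinuousLinearMap.adjoint A) (A u), u⟫)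
    (K : Set E) (hne : K.Nonempty) (hclosed : IsClosed K) (hconv : Convex ℝ K)
    (x : F) (z : E) (hzK : z ∈ K)
    (hzmin : ∀ u ∈ K,
      (1 / 2 : ℝ) * ⟪(ContinuousLinearMap.adjoint A) (A z), z⟫ -
        ⟪(ContinuousLinearMap.adjoint A) x, z⟫ ≤
      (1 / 2 : ℝ) * ⟪(ContinuousLinearMap.adjoint A) (A u), u⟫ -
        ⟪(ContinuousLinearMap.adjoint A) x, u⟫)
    (pr : F) (hprK : pr ∈ A '' K)
    (hprmin : ∀ w ∈ A '' K, ‖x - pr‖ ≤ ‖x - w‖) :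
    pr = A z :=
  projection_image_eq_general A K hconv x z hzK hzmin pr hprK hprmin
end

section
/- For n ≥ 2 and κ = 2ⁿ, the set Sₙ = {(x₁, x₂, x₃) ∈ ℝ³ : x₁^κ + x₂^κ ≤ x₃^κ, x₃ ≥ 0} equals the projection onto the first three coordinates of Kₙ = {(x₁, x₂, x₃, y₁, …, y_{n−1}, z₁, …, z_{n−1}) ∈ ℝ^{2n+1} : x₃² ≥ y₁² + z₁², x₃ ≥ 0, x₃yᵢ ≥ y_{i+1}² for i = 1,…,n−2, x₃y_{n−1} ≥ x₁², x₃zᵢ ≥ z_{i+1}² for i = 1,…,n−2, x₃z_{n−1} ≥ x₂²}. -/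
/-!
Iterating `y (i+1)^2 ≤ x₃ y i` along the chain `y 1, …, y (n-1), x₁` squares the last entry
once per step, giving `x₁^(2^n) ≤ x₃^(2^n-2) y₁²`; adding the same bound for `x₂, z` and using
`y₁² + z₁² ≤ x₃²` lands in `Sₙ`. Conversely, every inequality of the chain is attained with
equality by `y i = x₃ (x₁/x₃)^(2^(n-i))`, and then `y₁² + z₁² = x₃² (x₁^κ + x₂^κ)/x₃^κ ≤ x₃²`.
-/

theorem pow_two_pow_nonneg {R : Type*} [Ring R] [LinearOrder R] [IsStrictOrderedRing R]
    {n : ℕ} (hn : n ≠ 0) (x : R) : 0 ≤ x ^ 2 ^ n :=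
  (Nat.even_pow.mpr ⟨even_two, hn⟩).pow_nonneg x

theorem pow_two_pow_le_of_sq_le_mul {t : ℝ} (ht : 0 ≤ t) {a : ℕ → ℝ} {m : ℕ} (hm : 1 ≤ m)
    (h : ∀ k, 1 ≤ k → k < m → a (k + 1) ^ 2 ≤ t * a k) :
    a m ^ 2 ^ m ≤ t ^ (2 ^ m - 2) * a 1 ^ 2 := by
  induction m, hm using Nat.le_induction with
  | base => simp
  | succ m hm ih =>
    have h2m : 2 ≤ 2 ^ m := Nat.le_self_pow (by omega) 2
    calc a (m + 1) ^ 2 ^ (m + 1) = (a (m + 1) ^ 2) ^ 2 ^ m := by rw [pow_succ', pow_mul]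
      _ ≤ (t * a m) ^ 2 ^ m := pow_le_pow_left₀ (sq_nonneg _) (h m hm m.lt_succ_self) _
      _ = t ^ 2 ^ m * a m ^ 2 ^ m := mul_pow _ _ _
      _ ≤ t ^ 2 ^ m * (t ^ (2 ^ m - 2) * a 1 ^ 2) :=
          mul_le_mul_of_nonneg_left (ih fun k hk hkm => h k hk (by omega)) (pow_nonneg ht _)
      _ = t ^ (2 ^ (m + 1) - 2) * a 1 ^ 2 := by
          rw [← mul_assoc, ← pow_add, pow_succ]
          congr 2
          omega

theorem pow_two_pow_le_of_chain {n : ℕ} (hn : 2 ≤ n) {t x : ℝ} (ht : 0 ≤ t) {y : ℕ → ℝ}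
    (hy : ∀ i, 1 ≤ i → i ≤ n - 2 → y (i + 1) ^ 2 ≤ t * y i) (hx : x ^ 2 ≤ t * y (n - 1)) :
    x ^ 2 ^ n ≤ t ^ (2 ^ n - 2) * y 1 ^ 2 := by
  have key := pow_two_pow_le_of_sq_le_mul ht (a := Function.update y n x) (m := n) (by omega)
    fun k hk hkn => by
      rcases (by omega : k + 1 < n ∨ k + 1 = n) with hlt | hlast
      · rw [Function.update_of_ne hlt.ne, Function.update_of_ne (by omega)]
        exact hy k hk (by omega)
      · rw [hlast, Function.update_self, Function.update_of_ne (by omega),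
          show k = n - 1 by omega]
        exact hx
  rwa [Function.update_self, Function.update_of_ne (by omega)] at key

theorem eq_zero_of_pow_two_pow_le_zero_pow {n : ℕ} (hn : 1 ≤ n) {x : ℝ}
    (h : x ^ 2 ^ n ≤ 0 ^ 2 ^ n) : x = 0 := by
  rw [zero_pow (by positivity)] at h
  have hx : x ^ 2 ^ n = 0 := le_antisymm h (pow_two_pow_nonneg (by omega) x)
  exact pow_eq_zero_iff (by positivity) |>.mp hx

-- At `t = 0` the division yields the zero sequence, the right witness there since then `x = 0`.
noncomputable def powChain (t x : ℝ) (n i : ℕ) : ℝ := t * (x / t) ^ 2 ^ (n - i)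

section powChain

variable (t x : ℝ) {n : ℕ}

theorem powChain_succ_sq {i : ℕ} (hi : i < n) :
    powChain t x n (i + 1) ^ 2 = t * powChain t x n i := by
  have e : 2 ^ (n - i) = 2 ^ (n - (i + 1)) * 2 := by rw [← pow_succ]; congr 1; omega
  rw [powChain, powChain, e, pow_mul]
  ring

theorem mul_powChain_pred (hn : 1 ≤ n) (h : x ^ 2 ^ n ≤ t ^ 2 ^ n) :
    t * powChain t x n (n - 1) = x ^ 2 := by
  rw [powChain, show n - (n - 1) = 1 by omega]
  rcases eq_or_ne t 0 with rfl | ht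
  · simp [eq_zero_of_pow_two_pow_le_zero_pow hn h]
  · rw [pow_one, div_pow]
    field_simp

theorem powChain_one_sq_add_le {x' : ℝ} (hn : 1 ≤ n) (h : x ^ 2 ^ n + x' ^ 2 ^ n ≤ t ^ 2 ^ n) :
    powChain t x n 1 ^ 2 + powChain t x' n 1 ^ 2 ≤ t ^ 2 := by
  have e : 2 ^ n = 2 ^ (n - 1) * 2 := by rw [← pow_succ]; congr 1; omega
  have hsq : powChain t x n 1 ^ 2 + powChain t x' n 1 ^ 2
      = t ^ 2 * ((x ^ 2 ^ n + x' ^ 2 ^ n) / t ^ 2 ^ n) := by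
    rw [powChain, powChain, add_div, ← div_pow, ← div_pow, e, pow_mul, pow_mul]
    ring
  have hn0 : n ≠ 0 := by omega
  rw [hsq]
  exact mul_le_of_le_one_right (sq_nonneg t) (div_le_one_of_le₀ h
    ((add_nonneg (pow_two_pow_nonneg hn0 x) (pow_two_pow_nonneg hn0 x')).trans h))

end powChain

/-- For `n ≥ 2` and `κ = 2ⁿ`, a point `(x₁, x₂, x₃)` satisfies
`x₁^κ + x₂^κ ≤ x₃^κ, x₃ ≥ 0` (i.e. lies in `Sₙ`) iff it is the projection onto
the first three coordinates of a point of the cone `Kₙ`, i.e. iff there exist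
`y₁,…,y_{n−1}, z₁,…,z_{n−1}` satisfying the defining inequalities of `Kₙ`. -/
theorem S_eq_projection_K (n : ℕ) (hn : 2 ≤ n) (x1 x2 x3 : ℝ) :
    (x1 ^ (2 ^ n) + x2 ^ (2 ^ n) ≤ x3 ^ (2 ^ n) ∧ 0 ≤ x3) ↔
    ∃ y z : ℕ → ℝ,
      (y 1) ^ 2 + (z 1) ^ 2 ≤ x3 ^ 2 ∧ 0 ≤ x3 ∧
      (∀ i : ℕ, 1 ≤ i → i ≤ n - 2 → (y (i + 1)) ^ 2 ≤ x3 * y i) ∧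
      x1 ^ 2 ≤ x3 * y (n - 1) ∧
      (∀ i : ℕ, 1 ≤ i → i ≤ n - 2 → (z (i + 1)) ^ 2 ≤ x3 * z i) ∧
      x2 ^ 2 ≤ x3 * z (n - 1) := by
  constructor
  · rintro ⟨hS, hx3⟩
    have hn0 : n ≠ 0 := by omega
    have hx1 : x1 ^ 2 ^ n ≤ x3 ^ 2 ^ n := by linarith [pow_two_pow_nonneg hn0 x2]
    have hx2 : x2 ^ 2 ^ n ≤ x3 ^ 2 ^ n := by linarith [pow_two_pow_nonneg hn0 x1]
    exact ⟨powChain x3 x1 n, powChain x3 x2 n, powChain_one_sq_add_le x3 x1 (by omega) hS, hx3,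
      fun i _ hi => (powChain_succ_sq x3 x1 (by omega)).le,
      (mul_powChain_pred x3 x1 (by omega) hx1).ge,
      fun i _ hi => (powChain_succ_sq x3 x2 (by omega)).le,
      (mul_powChain_pred x3 x2 (by omega) hx2).ge⟩
  · rintro ⟨y, z, h1, hx3, hy, hyl, hz, hzl⟩
    have h2n : 2 ≤ 2 ^ n := Nat.le_self_pow (by omega) 2
    refine ⟨?_, hx3⟩
    calc x1 ^ 2 ^ n + x2 ^ 2 ^ n ≤ x3 ^ (2 ^ n - 2) * (y 1 ^ 2 + z 1 ^ 2) := by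
          rw [mul_add]
          exact add_le_add (pow_two_pow_le_of_chain hn hx3 hy hyl)
            (pow_two_pow_le_of_chain hn hx3 hz hzl)
      _ ≤ x3 ^ (2 ^ n - 2) * x3 ^ 2 := mul_le_mul_of_nonneg_left h1 (pow_nonneg hx3 _)
      _ = x3 ^ 2 ^ n := by rw [← pow_add]; congr 1; omega
end

section
/- Let n ≥ 2, κ = 2ⁿ, λ = κ/(κ−1). Let u₁, u₂ ≥ 0 with u₁^λ + u₂^λ = 1, and set v = (u₁, u₂, −1, 0, …, 0) ∈ ℝ^{2n+1}, a boundary point of Kₙ°. Then the normal cone of Kₙ° at v is the ray generated by w = (u₁^{λ/2ⁿ}, u₂^{λ/2ⁿ}, 1, u₁^{λ/2}, …, u₁^{λ/2^{n−1}}, u₂^{λ/2}, …, u₂^{λ/2^{n−1}}), i.e., N_{Kₙ°}(v) = {t·w : t ≥ 0}. -/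
open scoped RealInnerProductSpace

open Fin.NatCast in
/-- The cone `Kₙ ⊆ ℝ^{2n+1}`: coordinates are
`x₁ = p 0`, `x₂ = p 1`, `x₃ = p 2`, `yᵢ = p (2+i)` and `zᵢ = p (n+1+i)` for
`i = 1, …, n−1`. -/
def coneK (n : ℕ) : Set (EuclideanSpace ℝ (Fin (2 * n + 1))) :=
  {p | (p 3) ^ 2 + (p ((n : ℕ) + 2 : ℕ)) ^ 2 ≤ (p 2) ^ 2 ∧ 0 ≤ p 2 ∧
       (∀ i : ℕ, 1 ≤ i → i ≤ n - 2 → (p ((2 + i + 1 : ℕ))) ^ 2 ≤ p 2 * p ((2 + i : ℕ))) ∧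
       (p 0) ^ 2 ≤ p 2 * p ((n + 1 : ℕ)) ∧
       (∀ i : ℕ, 1 ≤ i → i ≤ n - 2 → (p ((n + 1 + i + 1 : ℕ))) ^ 2 ≤ p 2 * p ((n + 1 + i : ℕ))) ∧
       (p 1) ^ 2 ≤ p 2 * p ((2 * n : ℕ))}

/-- The polar cone. -/
def polarCone {m : ℕ} (C : Set (EuclideanSpace ℝ (Fin m))) : Set (EuclideanSpace ℝ (Fin m)) :=
  {v | ∀ x ∈ C, ⟪v, x⟫ ≤ 0}

/-- The normal cone of a convex set `D` at `z`. -/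
def normalConeAt {m : ℕ} (D : Set (EuclideanSpace ℝ (Fin m))) (z : EuclideanSpace ℝ (Fin m)) :
    Set (EuclideanSpace ℝ (Fin m)) :=
  {v | ∀ w ∈ D, ⟪v, w - z⟫ ≤ 0}

/-!
`Kₙ` is a closed convex cone, so by the bipolar theorem the normal cone of `Kₙ°` at a point
`v ∈ Kₙ°` is `Kₙ ∩ v^⊥`. Put `A = u₁^(λ/2ⁿ)` and `B = u₂^(λ/2ⁿ)`; then `A^(2ⁿ) + B^(2ⁿ) = 1`,
`u₁ = A^(2ⁿ-1)` and `u₂ = B^(2ⁿ-1)`. On the slice `x₃ = 1` of `Kₙ` the chain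
`x₁² ≤ y_{n-1}, y_{n-1}² ≤ y_{n-2}, …` gives `x₁^(2ⁿ) ≤ y₁²`, so `x₁^(2ⁿ) + x₂^(2ⁿ) ≤ y₁² + z₁² ≤ 1`
and Hölder's inequality gives `u₁x₁ + u₂x₂ ≤ 1 = x₃`: thus `v ∈ Kₙ°`. Equality in Hölder forces
`x₁ = A`, `x₂ = B`, after which every inequality of both chains is tight, which pins the point
down to `w`.
-/

section PolarCone

variable {m : ℕ}

theorem polarCone_polarCone_subset (C : ProperCone ℝ (EuclideanSpace ℝ (Fin m))) :
    polarCone (polarCone (C : Set (EuclideanSpace ℝ (Fin m)))) ⊆ C := by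
  intro x hx
  by_contra hxC
  obtain ⟨y, hyC, hxy⟩ := C.hyperplane_separation' hxC
  have hy : -y ∈ polarCone (C : Set (EuclideanSpace ℝ (Fin m))) := fun z hz => by
    simpa [real_inner_comm] using hyC z hz
  have := hx (-y) hy
  rw [inner_neg_right] at this
  linarith

theorem normalConeAt_polarCone (C : ProperCone ℝ (EuclideanSpace ℝ (Fin m)))
    {v : EuclideanSpace ℝ (Fin m)} (hv : v ∈ polarCone (C : Set (EuclideanSpace ℝ (Fin m)))) :
    normalConeAt (polarCone (C : Set (EuclideanSpace ℝ (Fin m)))) v = {x | x ∈ C ∧ ⟪x, v⟫ = 0} := by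
  ext x
  constructor
  · intro hx
    have h0 : 0 ≤ ⟪x, v⟫ := by
      simpa using hx 0 fun _ _ => by simp
    have h2 : ⟪x, v⟫ ≤ 0 := by
      have := hx ((2 : ℝ) • v) fun z hz => by
        rw [real_inner_smul_left]; exact mul_nonpos_of_nonneg_of_nonpos zero_le_two (hv z hz)
      rwa [two_smul, add_sub_cancel_right] at this
    have hxv : ⟪x, v⟫ = 0 := le_antisymm h2 h0
    refine ⟨polarCone_polarCone_subset C fun q hq => ?_, hxv⟩
    simpa [inner_sub_right, hxv] using hx q hq
  · rintro ⟨hxC, hxv⟩ q hq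
    rw [inner_sub_right, hxv, sub_zero, real_inner_comm]
    exact hq x hxC

end PolarCone

section RealInequalities

theorem add_sq_le_add_mul_add {a b c a' b' c' : ℝ} (h : b ^ 2 ≤ a * c) (h' : b' ^ 2 ≤ a' * c')
    (ha : 0 ≤ a) (hc : 0 ≤ c) (ha' : 0 ≤ a') (hc' : 0 ≤ c') :
    (b + b') ^ 2 ≤ (a + a') * (c + c') := by
  -- `(b b')² ≤ (a c') (a' c) ≤ ((a c' + a' c) / 2)²`
  have key : 2 * (b * b') ≤ a * c' + a' * c := by
    nlinarith [mul_le_mul h h' (sq_nonneg b') (mul_nonneg ha hc), sq_nonneg (a * c' - a' * c),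
      mul_nonneg ha hc', mul_nonneg ha' hc]
  nlinarith

theorem add_sq_add_add_sq_le_sq {a b e a' b' e' : ℝ} (h : a ^ 2 + b ^ 2 ≤ e ^ 2)
    (h' : a' ^ 2 + b' ^ 2 ≤ e' ^ 2) (he : 0 ≤ e) (he' : 0 ≤ e') :
    (a + a') ^ 2 + (b + b') ^ 2 ≤ (e + e') ^ 2 := by
  -- Cauchy–Schwarz: `(a a' + b b')² ≤ (a² + b²) (a'² + b'²) ≤ (e e')²`
  have key : a * a' + b * b' ≤ e * e' := by
    nlinarith [sq_nonneg (a * b' - b * a'), mul_nonneg he he',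
      mul_le_mul h h' (by positivity) (sq_nonneg e)]
  nlinarith

theorem mul_add_mul_le_one {a b p q : ℝ} (hab : a ^ 2 + b ^ 2 = 1) (hpq : p ^ 2 + q ^ 2 ≤ 1) :
    a * p + b * q ≤ 1 := by
  nlinarith [sq_nonneg (a - p), sq_nonneg (b - q)]

theorem eq_of_one_le_mul_add_mul {a b p q : ℝ} (hab : a ^ 2 + b ^ 2 = 1)
    (hpq : p ^ 2 + q ^ 2 ≤ 1) (h : 1 ≤ a * p + b * q) : p = a ∧ q = b := by
  have h0 : (a - p) ^ 2 + (b - q) ^ 2 ≤ 0 := by nlinarith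
  constructor <;> nlinarith [sq_nonneg (a - p), sq_nonneg (b - q)]

theorem eq_of_sq_eq_of_pow_mul_eq {s A : ℝ} {k : ℕ} (hsq : s ^ 2 = A ^ 2)
    (h : A ^ k * s = A ^ k * A) : s = A := by
  rcases eq_or_ne A 0 with rfl | hA
  · simpa using hsq
  · exact mul_left_cancel₀ (pow_ne_zero k hA) h

/-- Hölder's inequality in the plane for the exponents `2^m` and `2^m / (2^m - 1)`, with its
equality case; `(A^(2^m-1), B^(2^m-1))` is a general point of the dual unit sphere. -/
theorem holder_two_pow {m : ℕ} (hm : 1 ≤ m) {A B : ℝ} (hA : 0 ≤ A) (hB : 0 ≤ B)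
    (hAB : A ^ 2 ^ m + B ^ 2 ^ m = 1) {s t : ℝ} (hst : s ^ 2 ^ m + t ^ 2 ^ m ≤ 1) :
    A ^ (2 ^ m - 1) * s + B ^ (2 ^ m - 1) * t ≤ 1 ∧
      (1 ≤ A ^ (2 ^ m - 1) * s + B ^ (2 ^ m - 1) * t → s = A ∧ t = B) := by
  induction m, hm using Nat.le_induction generalizing A B s t with
  | base =>
    simp only [pow_one, Nat.add_one_sub_one] at hAB hst ⊢
    exact ⟨mul_add_mul_le_one hAB hst, fun h => eq_of_one_le_mul_add_mul hAB hst h⟩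
  | succ m hm ih =>
    -- Cauchy–Schwarz against `(A^(2^m), B^(2^m))` reduces the claim to `A², B², s², t²`.
    have hsplit : 2 ^ (m + 1) - 1 = 2 ^ m + (2 ^ m - 1) := by
      have := Nat.one_le_two_pow (n := m); rw [pow_succ]; omega
    have hsq : ∀ r : ℝ, r ^ 2 ^ (m + 1) = (r ^ 2) ^ 2 ^ m := fun r => by ring
    have hp : ∀ r x : ℝ, (r ^ (2 ^ m - 1) * x) ^ 2 = (r ^ 2) ^ (2 ^ m - 1) * x ^ 2 := fun r x => by
      ring
    have hpow : ∀ r : ℝ, r ^ 2 ^ m = r ^ (2 ^ m - 1) * r := fun r => by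
      rw [← pow_succ, Nat.sub_add_cancel Nat.one_le_two_pow]
    have hab : (A ^ 2 ^ m) ^ 2 + (B ^ 2 ^ m) ^ 2 = 1 := by rw [← hAB, hsq, hsq]; ring
    rw [hsq, hsq] at hAB hst
    obtain ⟨hle, heq⟩ := ih (sq_nonneg A) (sq_nonneg B) hAB hst
    rw [← hp, ← hp] at hle heq
    rw [hsplit, pow_add, pow_add, mul_assoc, mul_assoc]
    refine ⟨mul_add_mul_le_one hab hle, fun h => ?_⟩
    obtain ⟨hpA, hqB⟩ := eq_of_one_le_mul_add_mul hab hle h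
    obtain ⟨hs, ht⟩ := heq (by rw [hpA, hqB, hab])
    rw [hpow] at hpA hqB
    exact ⟨eq_of_sq_eq_of_pow_mul_eq hs hpA, eq_of_sq_eq_of_pow_mul_eq ht hqB⟩

theorem pow_two_pow_nonneg_s9 (x : ℝ) {k : ℕ} (hk : k ≠ 0) : 0 ≤ x ^ 2 ^ k :=
  (Nat.even_pow.2 ⟨even_two, hk⟩).pow_nonneg x

end RealInequalities

def IsSqChain (t : ℝ) (c : ℕ → ℝ) (N : ℕ) : Prop :=
  ∀ k < N, c k ^ 2 ≤ t * c (k + 1)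

namespace IsSqChain

variable {t : ℝ} {c : ℕ → ℝ} {N : ℕ}

theorem nonneg (h : IsSqChain t c N) (ht : 0 < t) {k : ℕ} (hk : 1 ≤ k) (hkN : k ≤ N) :
    0 ≤ c k := by
  obtain ⟨j, rfl⟩ := Nat.exists_eq_add_of_le' hk
  exact nonneg_of_mul_nonneg_right ((sq_nonneg _).trans (h j hkN)) ht

theorem eq_zero (h : IsSqChain 0 c N) {k : ℕ} (hk : k < N) : c k = 0 := by
  simpa using h k hk

theorem add {t' : ℝ} {c' : ℕ → ℝ} (h : IsSqChain t c N) (h' : IsSqChain t' c' N) (ht : 0 < t)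
    (ht' : 0 < t') : IsSqChain (t + t') (c + c') N := fun k hk =>
  add_sq_le_add_mul_add (h k hk) (h' k hk) ht.le (h.nonneg ht le_add_self hk) ht'.le
    (h'.nonneg ht' le_add_self hk)

theorem smul (h : IsSqChain t c N) (s : ℝ) : IsSqChain (s * t) (s • c) N :=
  fun k hk => by
    simp only [Pi.smul_apply, smul_eq_mul]
    nlinarith [h k hk, sq_nonneg s]

theorem pow_two_pow_le (h : IsSqChain 1 c N) {k : ℕ} (hk : k ≤ N) : c 0 ^ 2 ^ k ≤ c k := by
  induction k with
  | zero => simp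
  | succ k ih =>
    have hk' : k < N := hk
    calc c 0 ^ 2 ^ (k + 1) = (c 0 ^ 2 ^ k) ^ 2 := by rw [pow_succ, pow_mul]
      _ ≤ c k ^ 2 := by
        rcases k with _ | k
        · simp
        · exact pow_le_pow_left₀ (pow_two_pow_nonneg_s9 _ k.succ_ne_zero) (ih hk'.le) 2
      _ ≤ c (k + 1) := by simpa using h k hk'

theorem eq_pow_two_pow (h : IsSqChain 1 c N) (h0 : 0 ≤ c 0) (hN : c N ≤ c 0 ^ 2 ^ N) {k : ℕ}
    (hk : k ≤ N) : c k = c 0 ^ 2 ^ k := by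
  refine le_antisymm ?_ (h.pow_two_pow_le hk)
  induction hk using Nat.decreasingInduction with
  | of_succ k hk ih =>
    have hsq : c k ^ 2 ≤ (c 0 ^ 2 ^ k) ^ 2 := by
      calc c k ^ 2 ≤ c (k + 1) := by simpa using h k hk
        _ ≤ c 0 ^ 2 ^ (k + 1) := ih
        _ = (c 0 ^ 2 ^ k) ^ 2 := by rw [pow_succ, pow_mul]
    exact (pow_le_pow_iff_left₀ ((pow_nonneg h0 _).trans (h.pow_two_pow_le hk.le))
      (pow_nonneg h0 _) two_ne_zero).1 hsq
  | self => exact hN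

theorem eq_pow_two_pow_of_sq_add_sq_le {d : ℕ → ℝ} (hc : IsSqChain 1 c N) (hd : IsSqChain 1 d N)
    (hc0 : 0 ≤ c 0) (hd0 : 0 ≤ d 0) (h0 : (c 0 ^ 2 ^ N) ^ 2 + (d 0 ^ 2 ^ N) ^ 2 = 1)
    (htop : c N ^ 2 + d N ^ 2 ≤ 1) {k : ℕ} (hk : k ≤ N) : c k = c 0 ^ 2 ^ k := by
  refine hc.eq_pow_two_pow hc0 ?_ hk
  have hcN := hc.pow_two_pow_le le_rfl
  have hdN := pow_le_pow_left₀ (pow_nonneg hd0 _) (hd.pow_two_pow_le le_rfl) 2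
  exact (pow_le_pow_iff_left₀ ((pow_nonneg hc0 _).trans hcN) (pow_nonneg hc0 _) two_ne_zero).1
    (by linarith)

end IsSqChain

section ConeK

open Fin.NatCast

variable {n : ℕ}

/-- For `(a, o) = (0, 2)` this is `x₁, y_{n-1}, …, y₁`; for `(a, o) = (1, n + 1)` it is
`x₂, z_{n-1}, …, z₁`. -/
def coordChain (n : ℕ) (a : Fin (2 * n + 1)) (o : ℕ) (p : EuclideanSpace ℝ (Fin (2 * n + 1)))
    (k : ℕ) : ℝ :=
  if k = 0 then p a else p ((o + n - k : ℕ))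

theorem coordChain_apply_zero (a : Fin (2 * n + 1)) (o : ℕ)
    (p : EuclideanSpace ℝ (Fin (2 * n + 1))) : coordChain n a o p 0 = p a :=
  if_pos rfl

theorem coordChain_of_ne_zero (a : Fin (2 * n + 1)) (o : ℕ)
    (p : EuclideanSpace ℝ (Fin (2 * n + 1))) {k : ℕ} (hk : k ≠ 0) :
    coordChain n a o p k = p ((o + n - k : ℕ)) :=
  if_neg hk

theorem coordChain_zero (a : Fin (2 * n + 1)) (o : ℕ) : coordChain n a o 0 = 0 := by
  ext k; simp [coordChain]

theorem coordChain_add (a : Fin (2 * n + 1)) (o : ℕ)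
    (p q : EuclideanSpace ℝ (Fin (2 * n + 1))) :
    coordChain n a o (p + q) = coordChain n a o p + coordChain n a o q := by
  ext k; by_cases hk : k = 0 <;> simp [coordChain, hk]

theorem coordChain_smul (a : Fin (2 * n + 1)) (o : ℕ) (s : ℝ)
    (p : EuclideanSpace ℝ (Fin (2 * n + 1))) :
    coordChain n a o (s • p) = s • coordChain n a o p := by
  ext k; by_cases hk : k = 0 <;> simp [coordChain, hk]

theorem isSqChain_coordChain_iff (hn : 2 ≤ n) (a : Fin (2 * n + 1)) (o : ℕ) (t : ℝ)
    (p : EuclideanSpace ℝ (Fin (2 * n + 1))) :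
    IsSqChain t (coordChain n a o p) (n - 1) ↔
      (∀ i : ℕ, 1 ≤ i → i ≤ n - 2 → p ((o + i + 1 : ℕ)) ^ 2 ≤ t * p ((o + i : ℕ))) ∧
        p a ^ 2 ≤ t * p ((o + n - 1 : ℕ)) := by
  constructor
  · intro h
    refine ⟨fun i hi hin => ?_, by simpa [coordChain] using h 0 (by omega)⟩
    have := h (n - 1 - i) (by omega)
    rwa [coordChain_of_ne_zero _ _ _ (by omega), coordChain_of_ne_zero _ _ _ (by omega),
      show o + n - (n - 1 - i) = o + i + 1 by omega,
      show o + n - (n - 1 - i + 1) = o + i by omega] at this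
  · rintro ⟨h, h0⟩ k hk
    rcases Nat.eq_zero_or_pos k with rfl | hk0
    · simpa [coordChain] using h0
    · rw [coordChain_of_ne_zero _ _ _ hk0.ne', coordChain_of_ne_zero _ _ _ k.succ_ne_zero]
      have := h (n - 1 - k) (by omega) (by omega)
      rwa [show o + (n - 1 - k) + 1 = o + n - k by omega,
        show o + (n - 1 - k) = o + n - (k + 1) by omega] at this

theorem mem_coneK_iff (hn : 2 ≤ n) {p : EuclideanSpace ℝ (Fin (2 * n + 1))} :
    p ∈ coneK n ↔ 0 ≤ p 2 ∧
      coordChain n 0 2 p (n - 1) ^ 2 + coordChain n 1 (n + 1) p (n - 1) ^ 2 ≤ p 2 ^ 2 ∧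
      IsSqChain (p 2) (coordChain n 0 2 p) (n - 1) ∧
      IsSqChain (p 2) (coordChain n 1 (n + 1) p) (n - 1) := by
  have hy : coordChain n 0 2 p (n - 1) = p 3 := by
    rw [coordChain, if_neg (by omega), show 2 + n - (n - 1) = 3 by omega]; rfl
  have hz : coordChain n 1 (n + 1) p (n - 1) = p ((n + 2 : ℕ)) := by
    rw [coordChain, if_neg (by omega), show n + 1 + n - (n - 1) = n + 2 by omega]
  rw [hy, hz, isSqChain_coordChain_iff hn, isSqChain_coordChain_iff hn,
    show 2 + n - 1 = n + 1 by omega, show n + 1 + n - 1 = 2 * n by omega]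
  simp only [coneK, Set.mem_ofPred_eq]
  tauto

theorem eq_of_coordChain_eq (hn : 2 ≤ n) {p q : EuclideanSpace ℝ (Fin (2 * n + 1))}
    (h2 : p 2 = q 2) (hy : ∀ k ≤ n - 1, coordChain n 0 2 p k = coordChain n 0 2 q k)
    (hz : ∀ k ≤ n - 1, coordChain n 1 (n + 1) p k = coordChain n 1 (n + 1) q k) : p = q := by
  ext j
  rw [← Fin.cast_val_eq_self j]
  rcases (by omega : (j : ℕ) = 0 ∨ (j : ℕ) = 1 ∨ (j : ℕ) = 2 ∨ (3 ≤ (j : ℕ) ∧ (j : ℕ) ≤ n + 1) ∨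
      (n + 2 ≤ (j : ℕ) ∧ (j : ℕ) ≤ 2 * n)) with h | h | h | h | h
  · simpa [h, coordChain_apply_zero] using hy 0 (by omega)
  · simpa [h, coordChain_apply_zero] using hz 0 (by omega)
  · rw [h]; exact h2
  · have := hy (n + 2 - j) (by omega)
    rwa [coordChain_of_ne_zero _ _ _ (by omega), coordChain_of_ne_zero _ _ _ (by omega),
      show 2 + n - (n + 2 - j) = j by omega] at this
  · have := hz (2 * n + 1 - j) (by omega)
    rwa [coordChain_of_ne_zero _ _ _ (by omega), coordChain_of_ne_zero _ _ _ (by omega),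
      show n + 1 + n - (2 * n + 1 - j) = j by omega] at this

theorem eq_zero_of_mem_coneK (hn : 2 ≤ n) {p : EuclideanSpace ℝ (Fin (2 * n + 1))}
    (hp : p ∈ coneK n) (h2 : p 2 = 0) : p = 0 := by
  obtain ⟨-, htop, hy, hz⟩ := (mem_coneK_iff hn).1 hp
  rw [h2] at htop hy hz
  have hzero : ∀ {a : Fin (2 * n + 1)} {o : ℕ}, IsSqChain 0 (coordChain n a o p) (n - 1) →
      coordChain n a o p (n - 1) = 0 → ∀ k ≤ n - 1, coordChain n a o p k = coordChain n a o 0 k :=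
    fun hc htop k hk => by
      rcases hk.lt_or_eq with hk | rfl
      · rw [hc.eq_zero hk, coordChain_zero]; rfl
      · rw [htop, coordChain_zero]; rfl
  exact eq_of_coordChain_eq hn (by simpa using h2) (hzero hy (by nlinarith))
    (hzero hz (by nlinarith))

theorem smul_mem_coneK (hn : 2 ≤ n) {s : ℝ} (hs : 0 ≤ s) {p : EuclideanSpace ℝ (Fin (2 * n + 1))}
    (hp : p ∈ coneK n) : s • p ∈ coneK n := by
  obtain ⟨h2, htop, hy, hz⟩ := (mem_coneK_iff hn).1 hp
  simp only [mem_coneK_iff hn, coordChain_smul, PiLp.smul_apply, Pi.smul_apply, smul_eq_mul]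
  refine ⟨mul_nonneg hs h2, ?_, hy.smul s, hz.smul s⟩
  rw [mul_pow, mul_pow, mul_pow, ← mul_add]
  exact mul_le_mul_of_nonneg_left htop (sq_nonneg s)

theorem add_mem_coneK (hn : 2 ≤ n) {p q : EuclideanSpace ℝ (Fin (2 * n + 1))}
    (hp : p ∈ coneK n) (hq : q ∈ coneK n) : p + q ∈ coneK n := by
  obtain ⟨hp2, htop, hy, hz⟩ := (mem_coneK_iff hn).1 hp
  obtain ⟨hq2, htop', hy', hz'⟩ := (mem_coneK_iff hn).1 hq
  rcases hp2.eq_or_lt with hp2 | hp2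
  · rwa [eq_zero_of_mem_coneK hn hp hp2.symm, zero_add]
  rcases hq2.eq_or_lt with hq2 | hq2
  · rwa [eq_zero_of_mem_coneK hn hq hq2.symm, add_zero]
  simp only [mem_coneK_iff hn, coordChain_add, PiLp.add_apply, Pi.add_apply]
  exact ⟨by positivity, add_sq_add_add_sq_le_sq htop htop' hp2.le hq2.le, hy.add hy' hp2 hq2,
    hz.add hz' hp2 hq2⟩

theorem exists_eq_smul_of_mem_coneK (hn : 2 ≤ n) {x : EuclideanSpace ℝ (Fin (2 * n + 1))}
    (hx : x ∈ coneK n) (h2 : x 2 ≠ 0) : ∃ y ∈ coneK n, y 2 = 1 ∧ x = x 2 • y :=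
  ⟨(x 2)⁻¹ • x, smul_mem_coneK hn (inv_nonneg.2 hx.2.1) hx, by simp [h2],
    (smul_inv_smul₀ h2 x).symm⟩

theorem zero_mem_coneK : (0 : EuclideanSpace ℝ (Fin (2 * n + 1))) ∈ coneK n := by
  simp [coneK]

theorem isClosed_coneK : IsClosed (coneK n) := by
  simp only [coneK, Set.ofPred_and, Set.ofPred_forall]
  repeat' first | apply IsClosed.inter | refine isClosed_iInter fun _ => ?_ | apply isClosed_le
  all_goals fun_prop

def coneKProperCone (hn : 2 ≤ n) : ProperCone ℝ (EuclideanSpace ℝ (Fin (2 * n + 1))) where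
  carrier := coneK n
  add_mem' := add_mem_coneK hn
  zero_mem' := zero_mem_coneK
  smul_mem' c _ hp := smul_mem_coneK hn c.2 hp
  isClosed' := isClosed_coneK

end ConeK

section PowPoint

variable {n : ℕ} {A B : ℝ}

/-- In the coordinates of `coneK`: `x₃ = 1`, `x₁ = A`, `yᵢ = A^(2^(n-i))`, `x₂ = B`,
`zᵢ = B^(2^(n-i))`. -/
def IsPowPoint (n : ℕ) (A B : ℝ) (w : EuclideanSpace ℝ (Fin (2 * n + 1))) : Prop :=
  w 2 = 1 ∧ (∀ k ≤ n - 1, coordChain n 0 2 w k = A ^ 2 ^ k) ∧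
    ∀ k ≤ n - 1, coordChain n 1 (n + 1) w k = B ^ 2 ^ k

theorem IsPowPoint.eq (hn : 2 ≤ n) {w w' : EuclideanSpace ℝ (Fin (2 * n + 1))}
    (hw : IsPowPoint n A B w) (hw' : IsPowPoint n A B w') : w = w' :=
  eq_of_coordChain_eq hn (hw.1.trans hw'.1.symm)
    (fun k hk => (hw.2.1 k hk).trans (hw'.2.1 k hk).symm)
    (fun k hk => (hw.2.2 k hk).trans (hw'.2.2 k hk).symm)

theorem IsPowPoint.mem_coneK (hn : 2 ≤ n) (hAB : A ^ 2 ^ n + B ^ 2 ^ n = 1)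
    {w : EuclideanSpace ℝ (Fin (2 * n + 1))} (hw : IsPowPoint n A B w) : w ∈ coneK n := by
  obtain ⟨h2, hy, hz⟩ := hw
  have hchain : ∀ C : ℝ, IsSqChain 1 (fun k => C ^ 2 ^ k) (n - 1) := fun C k _ => by
    rw [one_mul, ← pow_mul, ← pow_succ]
  refine (mem_coneK_iff hn).2 ⟨h2 ▸ zero_le_one, ?_, ?_, ?_⟩
  · rw [hy _ le_rfl, hz _ le_rfl, h2, ← pow_mul, ← pow_mul, ← pow_succ,
      Nat.sub_add_cancel (by omega), hAB, one_pow]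
  · rw [h2]; exact fun k hk => by simpa [hy k hk.le, hy (k + 1) hk] using hchain A k hk
  · rw [h2]; exact fun k hk => by simpa [hz k hk.le, hz (k + 1) hk] using hchain B k hk

theorem IsPowPoint.pow_mul_add_pow_mul (hAB : A ^ 2 ^ n + B ^ 2 ^ n = 1)
    {w : EuclideanSpace ℝ (Fin (2 * n + 1))} (hw : IsPowPoint n A B w) :
    A ^ (2 ^ n - 1) * w 0 + B ^ (2 ^ n - 1) * w 1 = w 2 := by
  obtain ⟨h2, hy, hz⟩ := hw
  have h0 := hy 0 (Nat.zero_le _)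
  have h1 := hz 0 (Nat.zero_le _)
  rw [coordChain_apply_zero, pow_zero, pow_one] at h0 h1
  rw [h0, h1, h2, ← pow_succ, ← pow_succ, Nat.sub_add_cancel Nat.one_le_two_pow, hAB]

theorem pow_two_pow_add_le_one_of_mem_coneK (hn : 2 ≤ n) {x : EuclideanSpace ℝ (Fin (2 * n + 1))}
    (hx : x ∈ coneK n) (h2 : x 2 = 1) : x 0 ^ 2 ^ n + x 1 ^ 2 ^ n ≤ 1 := by
  obtain ⟨-, htop, hy, hz⟩ := (mem_coneK_iff hn).1 hx
  rw [h2, one_pow] at htop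
  rw [h2] at hy hz
  have hle : ∀ {a : Fin (2 * n + 1)} {o : ℕ}, IsSqChain 1 (coordChain n a o x) (n - 1) →
      x a ^ 2 ^ n ≤ coordChain n a o x (n - 1) ^ 2 := fun {a} {o} hc => by
    have := hc.pow_two_pow_le le_rfl
    rw [coordChain_apply_zero] at this
    calc x a ^ 2 ^ n = (x a ^ 2 ^ (n - 1)) ^ 2 := by
          rw [← pow_mul, ← pow_succ, Nat.sub_add_cancel (by omega)]
      _ ≤ _ := pow_le_pow_left₀ (pow_two_pow_nonneg_s9 _ (by omega)) this 2
  exact (add_le_add (hle hy) (hle hz)).trans htop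

theorem pow_mul_add_pow_mul_le_of_mem_coneK (hn : 2 ≤ n) (hA : 0 ≤ A) (hB : 0 ≤ B)
    (hAB : A ^ 2 ^ n + B ^ 2 ^ n = 1) {x : EuclideanSpace ℝ (Fin (2 * n + 1))}
    (hx : x ∈ coneK n) : A ^ (2 ^ n - 1) * x 0 + B ^ (2 ^ n - 1) * x 1 ≤ x 2 := by
  rcases eq_or_ne (x 2) 0 with h2 | h2
  · simp [eq_zero_of_mem_coneK hn hx h2]
  obtain ⟨y, hy, hy2, hxy⟩ := exists_eq_smul_of_mem_coneK hn hx h2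
  have hle := (holder_two_pow (by omega) hA hB hAB
    (pow_two_pow_add_le_one_of_mem_coneK hn hy hy2)).1
  rw [hxy]
  simp only [PiLp.smul_apply, smul_eq_mul, hy2]
  linarith [mul_le_mul_of_nonneg_left hle hx.2.1]

theorem isPowPoint_of_mem_coneK (hn : 2 ≤ n) (hA : 0 ≤ A) (hB : 0 ≤ B)
    (hAB : A ^ 2 ^ n + B ^ 2 ^ n = 1) {x : EuclideanSpace ℝ (Fin (2 * n + 1))}
    (hx : x ∈ coneK n) (h2 : x 2 = 1) (h : A ^ (2 ^ n - 1) * x 0 + B ^ (2 ^ n - 1) * x 1 = 1) :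
    IsPowPoint n A B x := by
  obtain ⟨hx0, hx1⟩ := (holder_two_pow (by omega) hA hB hAB
    (pow_two_pow_add_le_one_of_mem_coneK hn hx h2)).2 h.ge
  obtain ⟨-, htop, hy, hz⟩ := (mem_coneK_iff hn).1 hx
  rw [h2, one_pow] at htop
  rw [h2] at hy hz
  have hA' : coordChain n 0 2 x 0 = A := (coordChain_apply_zero _ _ _).trans hx0
  have hB' : coordChain n 1 (n + 1) x 0 = B := (coordChain_apply_zero _ _ _).trans hx1
  have h0 : (A ^ 2 ^ (n - 1)) ^ 2 + (B ^ 2 ^ (n - 1)) ^ 2 = 1 := by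
    rwa [← pow_mul, ← pow_mul, ← pow_succ, Nat.sub_add_cancel (by omega)]
  refine ⟨h2, fun k hk => ?_, fun k hk => ?_⟩
  · rw [← hA']
    exact hy.eq_pow_two_pow_of_sq_add_sq_le hz (hA' ▸ hA) (hB' ▸ hB) (by rwa [hA', hB']) htop hk
  · rw [← hB']
    exact hz.eq_pow_two_pow_of_sq_add_sq_le hy (hB' ▸ hB) (hA' ▸ hA) (by rwa [hA', hB', add_comm])
      (by rwa [add_comm]) hk

theorem IsPowPoint.eq_smul_of_mem_coneK (hn : 2 ≤ n) (hA : 0 ≤ A) (hB : 0 ≤ B)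
    (hAB : A ^ 2 ^ n + B ^ 2 ^ n = 1) {w : EuclideanSpace ℝ (Fin (2 * n + 1))}
    (hw : IsPowPoint n A B w) {x : EuclideanSpace ℝ (Fin (2 * n + 1))} (hx : x ∈ coneK n)
    (hxv : A ^ (2 ^ n - 1) * x 0 + B ^ (2 ^ n - 1) * x 1 = x 2) : x = x 2 • w := by
  rcases eq_or_ne (x 2) 0 with h2 | h2
  · rw [h2, zero_smul]
    exact eq_zero_of_mem_coneK hn hx h2
  obtain ⟨y, hy, hy2, hxy⟩ := exists_eq_smul_of_mem_coneK hn hx h2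
  have hyv : A ^ (2 ^ n - 1) * y 0 + B ^ (2 ^ n - 1) * y 1 = 1 := by
    rw [hxy] at hxv
    simp only [PiLp.smul_apply, smul_eq_mul, hy2] at hxv
    exact mul_left_cancel₀ h2 (by linarith)
  conv_lhs => rw [hxy]
  rw [(isPowPoint_of_mem_coneK hn hA hB hAB hy hy2 hyv).eq hn hw]

end PowPoint

section ExplicitPoints

variable {n : ℕ}

theorem inner_eq_mul_add_mul_sub (hn : 1 ≤ n) {u1 u2 : ℝ}
    {v : EuclideanSpace ℝ (Fin (2 * n + 1))}
    (hv : ∀ j : Fin (2 * n + 1),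
      v j = if (j : ℕ) = 0 then u1 else if (j : ℕ) = 1 then u2
            else if (j : ℕ) = 2 then -1 else 0) (x : EuclideanSpace ℝ (Fin (2 * n + 1))) :
    ⟪x, v⟫ = u1 * x 0 + u2 * x 1 - x 2 := by
  have h1 : ((1 : Fin (2 * n + 1)) : ℕ) = 1 := Nat.mod_eq_of_lt (show 1 < 2 * n + 1 by omega)
  have h2 : ((2 : Fin (2 * n + 1)) : ℕ) = 2 := Nat.mod_eq_of_lt (show 2 < 2 * n + 1 by omega)
  have hv' : v = u1 • EuclideanSpace.single 0 1 + u2 • EuclideanSpace.single 1 1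
      - EuclideanSpace.single 2 1 := by
    ext j
    simp only [hv, PiLp.sub_apply, PiLp.add_apply, PiLp.smul_apply, PiLp.single_apply,
      Fin.ext_iff, h1, h2, Fin.val_zero]
    split_ifs <;> simp_all
  simp [hv', inner_add_right, inner_sub_right, inner_smul_right,
    EuclideanSpace.inner_single_right]

theorem rpow_div_two_pow_pow {u : ℝ} (hu : 0 ≤ u) (e : ℝ) {k : ℕ} (hk : k ≤ n) :
    (u ^ (e / 2 ^ n)) ^ 2 ^ k = u ^ (e / 2 ^ (n - k)) := by
  rw [← Real.rpow_mul_natCast hu]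
  push_cast
  rw [show (2 : ℝ) ^ n = 2 ^ (n - k) * 2 ^ k by rw [← pow_add, Nat.sub_add_cancel hk]]
  field_simp

theorem rpow_conjExponent_div_pow_sub_one {u : ℝ} (hu : 0 ≤ u) (hn : 1 ≤ n) :
    (u ^ ((2 ^ n : ℝ) / (2 ^ n - 1) / 2 ^ n)) ^ (2 ^ n - 1) = u := by
  have h : (2 : ℝ) ^ n - 1 ≠ 0 := (sub_pos.2 (one_lt_pow₀ one_lt_two (by omega))).ne'
  rw [← Real.rpow_mul_natCast hu, Nat.cast_sub Nat.one_le_two_pow]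
  push_cast
  rw [show (2 ^ n : ℝ) / (2 ^ n - 1) / 2 ^ n * (2 ^ n - 1) = 1 by field_simp, Real.rpow_one]

theorem isPowPoint_of_apply_eq_rpow (hn : 2 ≤ n) {u1 u2 e : ℝ} (hu1 : 0 ≤ u1) (hu2 : 0 ≤ u2)
    {w : EuclideanSpace ℝ (Fin (2 * n + 1))}
    (hw : ∀ j : Fin (2 * n + 1),
      w j = if (j : ℕ) = 0 then u1 ^ (e / 2 ^ n)
            else if (j : ℕ) = 1 then u2 ^ (e / 2 ^ n)
            else if (j : ℕ) = 2 then 1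
            else if (j : ℕ) ≤ n + 1 then u1 ^ (e / 2 ^ ((j : ℕ) - 2))
            else u2 ^ (e / 2 ^ ((j : ℕ) - (n + 1)))) :
    IsPowPoint n (u1 ^ (e / 2 ^ n)) (u2 ^ (e / 2 ^ n)) w := by
  have h1 : ((1 : Fin (2 * n + 1)) : ℕ) = 1 := Nat.mod_eq_of_lt (show 1 < 2 * n + 1 by omega)
  have h2 : ((2 : Fin (2 * n + 1)) : ℕ) = 2 := Nat.mod_eq_of_lt (show 2 < 2 * n + 1 by omega)
  refine ⟨by rw [hw, h2]; simp, fun k hk => ?_, fun k hk => ?_⟩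
  all_goals rcases eq_or_ne k 0 with rfl | hk0
  · simpa [coordChain_apply_zero] using hw 0
  · rw [coordChain_of_ne_zero _ _ _ hk0, hw, Fin.val_cast_of_lt (by omega), if_neg (by omega),
      if_neg (by omega), if_neg (by omega), if_pos (by omega),
      rpow_div_two_pow_pow hu1 e (by omega), show 2 + n - k - 2 = n - k by omega]
  · rw [coordChain_apply_zero, hw, h1]; simp
  · rw [coordChain_of_ne_zero _ _ _ hk0, hw, Fin.val_cast_of_lt (by omega), if_neg (by omega),
      if_neg (by omega), if_neg (by omega), if_neg (by omega),
      rpow_div_two_pow_pow hu2 e (by omega), show n + 1 + n - k - (n + 1) = n - k by omega]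

end ExplicitPoints

theorem normalCone_polarK_ray_general (n : ℕ) (hn : 2 ≤ n) (u1 u2 : ℝ) (hu1 : 0 ≤ u1) (hu2 : 0 ≤ u2)
    (hsum : u1 ^ ((2 ^ n : ℝ) / (2 ^ n - 1)) + u2 ^ ((2 ^ n : ℝ) / (2 ^ n - 1)) = 1)
    (v w : EuclideanSpace ℝ (Fin (2 * n + 1)))
    (hv : ∀ j : Fin (2 * n + 1),
      v j = if (j : ℕ) = 0 then u1 else if (j : ℕ) = 1 then u2
            else if (j : ℕ) = 2 then -1 else 0)
    (hw : ∀ j : Fin (2 * n + 1),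
      w j = if (j : ℕ) = 0 then u1 ^ (((2 ^ n : ℝ) / (2 ^ n - 1)) / 2 ^ n)
            else if (j : ℕ) = 1 then u2 ^ (((2 ^ n : ℝ) / (2 ^ n - 1)) / 2 ^ n)
            else if (j : ℕ) = 2 then 1
            else if (j : ℕ) ≤ n + 1 then
              u1 ^ (((2 ^ n : ℝ) / (2 ^ n - 1)) / 2 ^ ((j : ℕ) - 2))
            else u2 ^ (((2 ^ n : ℝ) / (2 ^ n - 1)) / 2 ^ ((j : ℕ) - (n + 1)))) :
    normalConeAt (polarCone (coneK n)) v = {x | ∃ t : ℝ, 0 ≤ t ∧ x = t • w} := by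
  have hwA := isPowPoint_of_apply_eq_rpow hn hu1 hu2 hw
  have hinner := inner_eq_mul_add_mul_sub (by omega) hv
  rw [← rpow_conjExponent_div_pow_sub_one (n := n) hu1 (by omega),
    ← rpow_conjExponent_div_pow_sub_one (n := n) hu2 (by omega)] at hinner
  set A := u1 ^ ((2 ^ n : ℝ) / (2 ^ n - 1) / 2 ^ n) with hA_def
  set B := u2 ^ ((2 ^ n : ℝ) / (2 ^ n - 1) / 2 ^ n) with hB_def
  have hA : 0 ≤ A := Real.rpow_nonneg hu1 _
  have hB : 0 ≤ B := Real.rpow_nonneg hu2 _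
  have hAB : A ^ 2 ^ n + B ^ 2 ^ n = 1 := by
    simpa [hA_def, hB_def, rpow_div_two_pow_pow hu1 _ le_rfl, rpow_div_two_pow_pow hu2 _ le_rfl]
      using hsum
  have hvK : v ∈ polarCone (coneK n) := fun x hx => by
    rw [real_inner_comm, hinner]
    linarith [pow_mul_add_pow_mul_le_of_mem_coneK hn hA hB hAB hx]
  rw [show coneK n = coneKProperCone hn from rfl, normalConeAt_polarCone _ hvK]
  ext x
  constructor
  · rintro ⟨hx, hxv⟩
    exact ⟨x 2, hx.2.1, hwA.eq_smul_of_mem_coneK hn hA hB hAB hx (by linarith [hinner x])⟩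
  · rintro ⟨t, ht, rfl⟩
    refine ⟨smul_mem_coneK hn ht (hwA.mem_coneK hn hAB), ?_⟩
    rw [real_inner_smul_left, hinner, hwA.pow_mul_add_pow_mul hAB, sub_self, mul_zero]

/-- The normal cone of `Kₙ°` at the boundary point
`v = (u₁, u₂, −1, 0, …, 0)` is the ray generated by
`w = (u₁^{λ/2ⁿ}, u₂^{λ/2ⁿ}, 1, u₁^{λ/2}, …, u₁^{λ/2^{n−1}}, u₂^{λ/2}, …, u₂^{λ/2^{n−1}})`. -/
theorem normalCone_polarK_ray (n : ℕ) (hn : 2 ≤ n) (u1 u2 : ℝ) (hu1 : 0 ≤ u1) (hu2 : 0 ≤ u2)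
    (hsum : u1 ^ ((2 ^ n : ℝ) / (2 ^ n - 1)) + u2 ^ ((2 ^ n : ℝ) / (2 ^ n - 1)) = 1)
    (v w : EuclideanSpace ℝ (Fin (2 * n + 1)))
    (hv : ∀ j : Fin (2 * n + 1),
      v j = if (j : ℕ) = 0 then u1 else if (j : ℕ) = 1 then u2
            else if (j : ℕ) = 2 then -1 else 0)
    (hw : ∀ j : Fin (2 * n + 1),
      w j = if (j : ℕ) = 0 then u1 ^ (((2 ^ n : ℝ) / (2 ^ n - 1)) / 2 ^ n)
            else if (j : ℕ) = 1 then u2 ^ (((2 ^ n : ℝ) / (2 ^ n - 1)) / 2 ^ n)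
            else if (j : ℕ) = 2 then 1
            else if (j : ℕ) ≤ n + 1 then
              u1 ^ (((2 ^ n : ℝ) / (2 ^ n - 1)) / 2 ^ ((j : ℕ) - 2))
            else u2 ^ (((2 ^ n : ℝ) / (2 ^ n - 1)) / 2 ^ ((j : ℕ) - (n + 1))))
    (hvbdry : v ∈ frontier (polarCone (coneK n))) :
    normalConeAt (polarCone (coneK n)) v = {x | ∃ t : ℝ, 0 ≤ t ∧ x = t • w} :=
  normalCone_polarK_ray_general n hn u1 u2 hu1 hu2 hsum v w hv hw
end

section
/- Let n ≥ 2, κ = 2ⁿ, λ = κ/(κ−1), and let x = (x₁, x₂, x₃, y, z) ∈ Kₙ satisfy x₃ = 1 and x₁u₁ + x₂u₂ = 1, where u₁, u₂ ≥ 0 with u₁^λ + u₂^λ = 1. Then x₁ = u₁^{λ/κ}, x₂ = u₂^{λ/κ}, yᵢ = u₁^{λ/2^i}, and zᵢ = u₂^{λ/2^i} for all i = 1, …, n−1. -/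
/-!
The chains `x₃ yᵢ ≥ yᵢ₊₁²`, `x₃ y_{n-1} ≥ x₁²` force `y₁ ≥ |x₁|^{2^{n-1}}`, so `1 = x₃² ≥ y₁² + z₁²`
gives `|x₁|^κ + |x₂|^κ ≤ 1`. Since `(u₁, u₂)` is a unit vector for the dual exponent `λ`, Hölder's
inequality makes `x₁u₁ + x₂u₂ ≤ 1`, and equality forces equality in both instances of Young's
inequality: `x₁ = u₁^{λ/κ}`, `x₂ = u₂^{λ/κ}`. Then every inequality of the chains is tight, which
pins down the `yᵢ` and `zᵢ`.
-/

open Real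

section SquaringChain

variable {w : ℕ → ℝ} {a b : ℕ} {c : ℝ}

theorem pow_two_pow_le_of_sq_chain (hw : ∀ i, a ≤ i → i < b → w (i + 1) ^ 2 ≤ w i)
    (hc : 0 ≤ c) (hcb : c ^ 2 ≤ w b) : ∀ i, a ≤ i → i ≤ b → c ^ 2 ^ (b + 1 - i) ≤ w i := by
  intro i hai hib
  induction hib using Nat.decreasingInduction with
  | self => simpa using hcb
  | of_succ i hib ih =>
    calc c ^ 2 ^ (b + 1 - i) = (c ^ 2 ^ (b + 1 - (i + 1))) ^ 2 := by
          rw [← pow_mul, ← pow_succ]; congr 2; omega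
      _ ≤ w (i + 1) ^ 2 := by gcongr; exact ih (by omega)
      _ ≤ w i := hw i hai hib

theorem eq_pow_two_pow_of_sq_chain (hw : ∀ i, a ≤ i → i < b → w (i + 1) ^ 2 ≤ w i)
    (hc : 0 ≤ c) (hcb : c ^ 2 ≤ w b) (ha : w a ≤ c ^ 2 ^ (b + 1 - a)) :
    ∀ i, a ≤ i → i ≤ b → w i = c ^ 2 ^ (b + 1 - i) := by
  intro i hai
  induction i, hai using Nat.le_induction with
  | base => exact fun hab ↦ le_antisymm ha (pow_two_pow_le_of_sq_chain hw hc hcb a le_rfl hab)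
  | succ i hai ih =>
    intro hib
    refine le_antisymm ?_ (pow_two_pow_le_of_sq_chain hw hc hcb (i + 1) (by omega) hib)
    refine le_of_pow_le_pow_left₀ two_ne_zero (by positivity) ?_
    calc w (i + 1) ^ 2 ≤ w i := hw i hai (by omega)
      _ = c ^ 2 ^ (b + 1 - i) := ih (by omega)
      _ = (c ^ 2 ^ (b + 1 - (i + 1))) ^ 2 := by rw [← pow_mul, ← pow_succ]; congr 2; omega

end SquaringChain

theorem rpow_div_two_pow_pow_two_pow {u : ℝ} (hu : 0 ≤ u) (r : ℝ) {i n : ℕ} (hi : i ≤ n) :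
    (u ^ (r / 2 ^ n)) ^ 2 ^ (n - i) = u ^ (r / 2 ^ i) := by
  rw [← rpow_natCast, ← rpow_mul hu]
  congr 1
  have h2n : (2 : ℝ) ^ n = 2 ^ i * 2 ^ (n - i) := by rw [← pow_add, Nat.add_sub_cancel' hi]
  push_cast
  rw [h2n]
  field_simp

section SquaringChainFromOne

variable {n : ℕ} {w : ℕ → ℝ}

theorem abs_rpow_two_pow_le_sq_of_sq_chain (hn : 2 ≤ n)
    (hw : ∀ i, 1 ≤ i → i ≤ n - 2 → w (i + 1) ^ 2 ≤ w i) {x : ℝ} (hx : x ^ 2 ≤ w (n - 1)) :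
    |x| ^ (2 ^ n : ℝ) ≤ w 1 ^ 2 := by
  have h := pow_two_pow_le_of_sq_chain (b := n - 1) (fun i h1 h2 ↦ hw i h1 (by omega)) (abs_nonneg x)
    (by rwa [sq_abs]) 1 le_rfl (by omega)
  calc |x| ^ (2 ^ n : ℝ) = (|x| ^ 2 ^ (n - 1 + 1 - 1)) ^ 2 := by
        rw [← pow_mul, ← pow_succ, show n - 1 + 1 - 1 + 1 = n by omega, ← rpow_natCast]; norm_cast
    _ ≤ w 1 ^ 2 := by gcongr

theorem eq_rpow_div_two_pow_of_sq_chain (hn : 2 ≤ n)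
    (hw : ∀ i, 1 ≤ i → i ≤ n - 2 → w (i + 1) ^ 2 ≤ w i) {u r : ℝ} (hu : 0 ≤ u)
    (htop : (u ^ (r / 2 ^ n)) ^ 2 ≤ w (n - 1)) (hbot : w 1 ^ 2 ≤ u ^ r) :
    ∀ i, 1 ≤ i → i ≤ n - 1 → w i = u ^ (r / 2 ^ i) := by
  have hpow : ∀ i ≤ n, (u ^ (r / 2 ^ n)) ^ 2 ^ (n - 1 + 1 - i) = u ^ (r / 2 ^ i) := fun i hi ↦ by
    rw [Nat.sub_add_cancel (by omega)]; exact rpow_div_two_pow_pow_two_pow hu r hi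
  have hone : w 1 ≤ (u ^ (r / 2 ^ n)) ^ 2 ^ (n - 1 + 1 - 1) := by
    refine le_of_pow_le_pow_left₀ two_ne_zero (by positivity) ?_
    have hsq : (u ^ (r / 2 ^ 1)) ^ 2 = u ^ r := by
      rw [← rpow_natCast, ← rpow_mul hu, Nat.cast_two, pow_one, div_mul_cancel₀ _ two_ne_zero]
    rwa [hpow 1 (by omega), hsq]
  intro i h1 h2
  rw [eq_pow_two_pow_of_sq_chain (fun i h1 h2 ↦ hw i h1 (by omega)) (rpow_nonneg hu _) htop hone
    i h1 h2, hpow i (by omega)]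

end SquaringChainFromOne

theorem eq_rpow_of_mul_eq_young {p q a u : ℝ} (hpq : p.HolderConjugate q) (hu : 0 ≤ u)
    (h : a * u = |a| ^ p / p + u ^ q / q) : a = u ^ (q / p) := by
  have habs : |a| * u = |a| ^ p / p + u ^ q / q :=
    le_antisymm (young_inequality_of_nonneg (abs_nonneg a) hu hpq)
      (h ▸ mul_le_mul_of_nonneg_right (le_abs_self a) hu)
  have hpow : |a| ^ p = u ^ q := (young_inequality_eq_iff_of_nonneg (abs_nonneg a) hu hpq).1 habs
  have habs_eq : |a| = u ^ (q / p) := by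
    rw [← rpow_rpow_inv (abs_nonneg a) hpq.ne_zero, hpow, ← rpow_mul hu, div_eq_mul_inv]
  have hsign : 0 ≤ a := by
    rcases hu.eq_or_lt with rfl | hu
    · rw [zero_rpow (div_ne_zero hpq.symm.ne_zero hpq.ne_zero), abs_eq_zero] at habs_eq
      exact habs_eq.ge
    · exact (mul_right_cancel₀ hu.ne' (h.trans habs.symm)) ▸ abs_nonneg a
  rw [← habs_eq, abs_of_nonneg hsign]

theorem eq_rpow_of_one_le_mul_add_mul {p q a b u v : ℝ} (hpq : p.HolderConjugate q)
    (hu : 0 ≤ u) (hv : 0 ≤ v) (hab : |a| ^ p + |b| ^ p ≤ 1) (huv : u ^ q + v ^ q = 1)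
    (h : 1 ≤ a * u + b * v) : a = u ^ (q / p) ∧ b = v ^ (q / p) := by
  have hya := young_inequality a u hpq
  have hyb := young_inequality b v hpq
  rw [abs_of_nonneg hu] at hya
  rw [abs_of_nonneg hv] at hyb
  have hp : |a| ^ p / p + |b| ^ p / p ≤ 1 / p := by
    rw [← add_div]; exact div_le_div_of_nonneg_right hab hpq.nonneg
  have hq : u ^ q / q + v ^ q / q = 1 / q := by rw [← add_div, huv]
  have hpq_one : 1 / p + 1 / q = 1 := by simpa only [one_div] using hpq.inv_add_inv_eq_one
  exact ⟨eq_rpow_of_mul_eq_young hpq hu (by linarith),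
    eq_rpow_of_mul_eq_young hpq hv (by linarith)⟩

theorem hoelder_uniqueness_in_K_general (n : ℕ) (hn : 2 ≤ n)
    (u1 u2 : ℝ) (hu1 : 0 ≤ u1) (hu2 : 0 ≤ u2)
    (hsum : u1 ^ ((2 ^ n : ℝ) / (2 ^ n - 1)) + u2 ^ ((2 ^ n : ℝ) / (2 ^ n - 1)) = 1)
    (x1 x2 x3 : ℝ) (y z : ℕ → ℝ)
    (hx3 : x3 = 1)
    (hK1 : (y 1) ^ 2 + (z 1) ^ 2 ≤ x3 ^ 2)
    (hKy : ∀ i : ℕ, 1 ≤ i → i ≤ n - 2 → (y (i + 1)) ^ 2 ≤ x3 * y i)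
    (hKy' : x1 ^ 2 ≤ x3 * y (n - 1))
    (hKz : ∀ i : ℕ, 1 ≤ i → i ≤ n - 2 → (z (i + 1)) ^ 2 ≤ x3 * z i)
    (hKz' : x2 ^ 2 ≤ x3 * z (n - 1))
    (heq : x1 * u1 + x2 * u2 = 1) :
    x1 = u1 ^ (((2 ^ n : ℝ) / (2 ^ n - 1)) / 2 ^ n) ∧
    x2 = u2 ^ (((2 ^ n : ℝ) / (2 ^ n - 1)) / 2 ^ n) ∧
    (∀ i : ℕ, 1 ≤ i → i ≤ n - 1 →
      y i = u1 ^ (((2 ^ n : ℝ) / (2 ^ n - 1)) / 2 ^ i) ∧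
      z i = u2 ^ (((2 ^ n : ℝ) / (2 ^ n - 1)) / 2 ^ i)) := by
  subst hx3
  simp only [one_mul, one_pow] at hK1 hKy hKy' hKz hKz'
  set L : ℝ := 2 ^ n / (2 ^ n - 1)
  have hconj : (2 ^ n : ℝ).HolderConjugate L := .conjExponent (one_lt_pow₀ one_lt_two (by omega))
  have hy1 := abs_rpow_two_pow_le_sq_of_sq_chain hn hKy hKy'
  have hz1 := abs_rpow_two_pow_le_sq_of_sq_chain hn hKz hKz'
  obtain ⟨hx1, hx2⟩ := eq_rpow_of_one_le_mul_add_mul hconj hu1 hu2 (by linarith) hsum heq.ge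
  have hpow : ∀ {x u : ℝ}, 0 ≤ u → x = u ^ (L / 2 ^ n) → |x| ^ (2 ^ n : ℝ) = u ^ L := by
    rintro x u hu rfl
    rw [abs_of_nonneg (rpow_nonneg hu _), ← rpow_mul hu, div_mul_cancel₀ _ (by positivity)]
  rw [hpow hu1 hx1] at hy1
  rw [hpow hu2 hx2] at hz1
  refine ⟨hx1, hx2, fun i h1 h2 ↦ ⟨?_, ?_⟩⟩
  · exact eq_rpow_div_two_pow_of_sq_chain hn hKy hu1 (hx1 ▸ hKy') (by linarith) i h1 h2
  · exact eq_rpow_div_two_pow_of_sq_chain hn hKz hu2 (hx2 ▸ hKz') (by linarith) i h1 h2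

/-- Uniqueness via the equality case of Hölder's inequality: if
`(x₁, x₂, 1, y, z) ∈ Kₙ` and `x₁u₁ + x₂u₂ = 1` with `u₁, u₂ ≥ 0`,
`u₁^λ + u₂^λ = 1` (where `κ = 2ⁿ`, `λ = κ/(κ−1)`), then
`x₁ = u₁^{λ/κ}`, `x₂ = u₂^{λ/κ}`, `yᵢ = u₁^{λ/2^i}`, `zᵢ = u₂^{λ/2^i}`. -/
theorem hoelder_uniqueness_in_K (n : ℕ) (hn : 2 ≤ n)
    (u1 u2 : ℝ) (hu1 : 0 ≤ u1) (hu2 : 0 ≤ u2)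
    (hsum : u1 ^ ((2 ^ n : ℝ) / (2 ^ n - 1)) + u2 ^ ((2 ^ n : ℝ) / (2 ^ n - 1)) = 1)
    (x1 x2 x3 : ℝ) (y z : ℕ → ℝ)
    (hx3 : x3 = 1)
    (hK1 : (y 1) ^ 2 + (z 1) ^ 2 ≤ x3 ^ 2) (hK2 : 0 ≤ x3)
    (hKy : ∀ i : ℕ, 1 ≤ i → i ≤ n - 2 → (y (i + 1)) ^ 2 ≤ x3 * y i)
    (hKy' : x1 ^ 2 ≤ x3 * y (n - 1))
    (hKz : ∀ i : ℕ, 1 ≤ i → i ≤ n - 2 → (z (i + 1)) ^ 2 ≤ x3 * z i)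
    (hKz' : x2 ^ 2 ≤ x3 * z (n - 1))
    (heq : x1 * u1 + x2 * u2 = 1) :
    x1 = u1 ^ (((2 ^ n : ℝ) / (2 ^ n - 1)) / 2 ^ n) ∧
    x2 = u2 ^ (((2 ^ n : ℝ) / (2 ^ n - 1)) / 2 ^ n) ∧
    (∀ i : ℕ, 1 ≤ i → i ≤ n - 1 →
      y i = u1 ^ (((2 ^ n : ℝ) / (2 ^ n - 1)) / 2 ^ i) ∧
      z i = u2 ^ (((2 ^ n : ℝ) / (2 ^ n - 1)) / 2 ^ i)) :=
  hoelder_uniqueness_in_K_general n hn u1 u2 hu1 hu2 hsum x1 x2 x3 y z hx3 hK1 hKy hKy' hKz hKz' heq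
end
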